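/- arXiv:1001.2637 — 2 statements merged into one kernel-verified Lean document; each statement's English description precedes it below -/
import Mathlib

section
/- Let G be a second countable locally compact Hausdorff group. Assume that Spc(KK^G) = ⋃_H (Res_G^H)^*(Spc(KK^H)), where H runs through all compact subgroups of G and (Res_G^H)^* is the map Q ↦ (Res_G^H)^{-1}(Q) on Balmer spectra induced by restriction. Then the Dirac morphism D^G : P^G(1) → 1 is an isomorphism in KK^G (equivalently N^G(1) ≅ 0), so that G satisfies the Baum–Connes conjecture for every functor on KK^G and every coefficient algebra. -/
/-!
Statement 1 (Theorem 4.7): if the Balmer spectrum of the equivariant Kasparov category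
`KK^G` is covered by the images of the spectra of the `KK^H`, `H` running through the
compact subgroups of `G`, then the Dirac morphism `D^G : P^G(1) → 1` is an isomorphism
(equivalently `N^G(1) ≅ 0`), so `G` satisfies the Baum–Connes conjecture for every functor
on `KK^G` and every coefficient algebra.

Since the Kasparov categories themselves are not available in Mathlib, we quantify over
the relevant structure: `C` stands for the tensor triangulated category `KK^G` (with
countable coproducts), `D h` for `KK^H` (`h` ranging over the compact subgroups), `Res h`
for the restriction functors and `Ind h` for the induction functors; the objects
`P1 → 𝟙 → N1 → P1⟦1⟧` form the Meyer–Nest gluing triangle of the unit for the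
complementary pair `(⟨CI^G⟩_loc, CC^G)`, so that `d` is the Dirac morphism, `N1` is
`⊗`-idempotent and is killed by all the restriction functors.
-/

open CategoryTheory Limits Pretriangulated Opposite MonoidalCategory

universe v u

namespace Stmt1

variable {C : Type u} [Category.{v} C] [Preadditive C] [HasZeroObject C]
  [HasShift C ℤ] [∀ n : ℤ, (shiftFunctor C n).Additive] [Pretriangulated C]
  [MonoidalCategory C] [SymmetricCategory C] [HasCountableCoproducts C]
  [HasBinaryBiproducts C]

/-- A thick `⊗`-ideal of `C`. -/
structure IsThickIdeal {C : Type u} [Category.{v} C] [Preadditive C] [HasZeroObject C]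
    [HasShift C ℤ] [∀ n : ℤ, (shiftFunctor C n).Additive] [Pretriangulated C]
    [MonoidalCategory C] [HasBinaryBiproducts C] (J : Set C) : Prop where
  zero : ∀ A : C, IsZero A → A ∈ J
  iso : ∀ ⦃A B : C⦄, (A ≅ B) → A ∈ J → B ∈ J
  shift : ∀ A ∈ J, A⟦(1 : ℤ)⟧ ∈ J
  unshift : ∀ A ∈ J, A⟦(-1 : ℤ)⟧ ∈ J
  tri : ∀ T ∈ distTriang C, T.obj₁ ∈ J → T.obj₂ ∈ J → T.obj₃ ∈ J
  smd : ∀ A B : C, (A ⊞ B) ∈ J → A ∈ J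
  tensor : ∀ A ∈ J, ∀ B : C, (A ⊗ B) ∈ J

/-- A prime thick `⊗`-ideal of the (essentially small) tensor triangulated category `C`;
the Balmer spectrum `Spc C` is the set of these. -/
structure IsPrimeIdeal {C : Type u} [Category.{v} C] [Preadditive C] [HasZeroObject C]
    [HasShift C ℤ] [∀ n : ℤ, (shiftFunctor C n).Additive] [Pretriangulated C]
    [MonoidalCategory C] [HasBinaryBiproducts C] (P : Set C) : Prop where
  ideal : IsThickIdeal P
  proper : P ≠ Set.univ
  prime : ∀ A B : C, (A ⊗ B) ∈ P → A ∈ P ∨ B ∈ P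

/-- A localizing (w.r.t. countable coproducts) subcategory of `C`. -/
structure IsLocalizing (S : Set C) : Prop where
  zero : ∀ A : C, IsZero A → A ∈ S
  iso : ∀ ⦃A B : C⦄, (A ≅ B) → A ∈ S → B ∈ S
  shift : ∀ A ∈ S, A⟦(1 : ℤ)⟧ ∈ S
  unshift : ∀ A ∈ S, A⟦(-1 : ℤ)⟧ ∈ S
  tri : ∀ T ∈ distTriang C, T.obj₁ ∈ S → T.obj₂ ∈ S → T.obj₃ ∈ S
  coprod : ∀ (ι : Type) (_ : Countable ι) (f : ι → C), (∀ i, f i ∈ S) → (∐ f) ∈ S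

/-- The localizing subcategory generated by a class of objects. -/
def locGen (E : Set C) : Set C := ⋂₀ {S : Set C | IsLocalizing S ∧ E ⊆ S}

section Auxiliary

/-- An arbitrary intersection of thick `⊗`-ideals is a thick `⊗`-ideal. -/
lemma isThickIdeal_sInter {S : Set (Set C)} (h : ∀ J ∈ S, IsThickIdeal J) :
    IsThickIdeal (⋂₀ S) where
  zero A hA := Set.mem_sInter.2 fun J hJ => (h J hJ).zero A hA
  iso A B e hA := Set.mem_sInter.2 fun J hJ => (h J hJ).iso e (Set.mem_sInter.1 hA J hJ)
  shift A hA := Set.mem_sInter.2 fun J hJ => (h J hJ).shift A (Set.mem_sInter.1 hA J hJ)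
  unshift A hA := Set.mem_sInter.2 fun J hJ => (h J hJ).unshift A (Set.mem_sInter.1 hA J hJ)
  tri T hT h₁ h₂ := Set.mem_sInter.2 fun J hJ =>
    (h J hJ).tri T hT (Set.mem_sInter.1 h₁ J hJ) (Set.mem_sInter.1 h₂ J hJ)
  smd A B hA := Set.mem_sInter.2 fun J hJ => (h J hJ).smd A B (Set.mem_sInter.1 hA J hJ)
  tensor A hA B := Set.mem_sInter.2 fun J hJ => (h J hJ).tensor A (Set.mem_sInter.1 hA J hJ) B

/-- The thick `⊗`-ideal generated by a class of objects. -/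
def thickGen (E : Set C) : Set C := ⋂₀ {J : Set C | IsThickIdeal J ∧ E ⊆ J}

lemma isThickIdeal_thickGen (E : Set C) : IsThickIdeal (thickGen E) :=
  isThickIdeal_sInter fun _ hJ => hJ.1

lemma subset_thickGen (E : Set C) : E ⊆ thickGen E :=
  fun _ hx => Set.mem_sInter.2 fun _ hJ => hJ.2 hx

lemma thickGen_subset {E J : Set C} (hJ : IsThickIdeal J) (hEJ : E ⊆ J) :
    thickGen E ⊆ J :=
  fun _ hx => Set.mem_sInter.1 hx J ⟨hJ, hEJ⟩

variable [∀ A : C, (tensorRight A).CommShift ℤ] [∀ A : C, (tensorRight A).IsTriangulated]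

/-- The class of zero objects is a thick `⊗`-ideal. -/
lemma isThickIdeal_isZero : IsThickIdeal {A : C | IsZero A} where
  zero _ hA := hA
  iso _ _ e hA := hA.of_iso e.symm
  shift A hA := Functor.map_isZero (shiftFunctor C (1 : ℤ)) hA
  unshift A hA := Functor.map_isZero (shiftFunctor C (-1 : ℤ)) hA
  tri T hT h₁ h₂ := Pretriangulated.Triangle.isZero₃_of_isZero₁₂ T hT h₁ h₂
  smd A B hA := by
    rw [Set.mem_setOf_eq, IsZero.iff_id_eq_zero] at hA ⊢
    calc 𝟙 A = biprod.inl ≫ 𝟙 (A ⊞ B) ≫ biprod.fst := by simp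
    _ = biprod.inl ≫ (0 : A ⊞ B ⟶ A ⊞ B) ≫ biprod.fst := by rw [hA]
    _ = 0 := by simp
  tensor A hA B := Functor.map_isZero (tensorRight B) hA

/-- Tensoring on the right with a fixed object pulls thick `⊗`-ideals back to
thick `⊗`-ideals. -/
lemma isThickIdeal_tensorRight_preimage {P : Set C} (hP : IsThickIdeal P) (s : C) :
    IsThickIdeal {x : C | x ⊗ s ∈ P} where
  zero A hA := hP.zero _ (Functor.map_isZero (tensorRight s) hA)
  iso A B e hA := hP.iso ((tensorRight s).mapIso e) hA
  shift A hA := hP.iso (((tensorRight s).commShiftIso (1 : ℤ)).app A).symm (hP.shift _ hA)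
  unshift A hA := hP.iso (((tensorRight s).commShiftIso (-1 : ℤ)).app A).symm (hP.unshift _ hA)
  tri T hT h₁ h₂ :=
    hP.tri ((tensorRight s).mapTriangle.obj T) ((tensorRight s).map_distinguished T hT) h₁ h₂
  smd A B hA := by
    haveI := Limits.preservesBinaryBiproduct_of_preservesBiproduct (tensorRight s) A B
    exact hP.smd (A ⊗ s) (B ⊗ s) (hP.iso ((tensorRight s).mapBiprod A B) hA)
  tensor A hA B := hP.iso
    (α_ A s B ≪≫ whiskerLeftIso A (β_ s B) ≪≫ (α_ A B s).symm)
    (hP.tensor (A ⊗ s) hA B)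

/-- The union of a nonempty chain of thick `⊗`-ideals is a thick `⊗`-ideal. -/
lemma isThickIdeal_sUnion_chain {S : Set (Set C)} (hne : S.Nonempty)
    (hch : IsChain (· ⊆ ·) S) (h : ∀ J ∈ S, IsThickIdeal J) :
    IsThickIdeal (⋃₀ S) where
  zero A hA := by
    obtain ⟨J, hJ⟩ := hne
    exact ⟨J, hJ, (h J hJ).zero A hA⟩
  iso A B e := by
    rintro ⟨J, hJ, hA⟩
    exact ⟨J, hJ, (h J hJ).iso e hA⟩
  shift A := by
    rintro ⟨J, hJ, hA⟩
    exact ⟨J, hJ, (h J hJ).shift A hA⟩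
  unshift A := by
    rintro ⟨J, hJ, hA⟩
    exact ⟨J, hJ, (h J hJ).unshift A hA⟩
  tri T hT := by
    rintro ⟨J₁, hJ₁, h₁⟩ ⟨J₂, hJ₂, h₂⟩
    rcases hch.total hJ₁ hJ₂ with hle | hle
    · exact ⟨J₂, hJ₂, (h J₂ hJ₂).tri T hT (hle h₁) h₂⟩
    · exact ⟨J₁, hJ₁, (h J₁ hJ₁).tri T hT h₁ (hle h₂)⟩
  smd A B := by
    rintro ⟨J, hJ, hA⟩
    exact ⟨J, hJ, (h J hJ).smd A B hA⟩
  tensor A := by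
    rintro ⟨J, hJ, hA⟩ B
    exact ⟨J, hJ, (h J hJ).tensor A hA B⟩

end Auxiliary

/-- Theorem 4.7 and Theorem 1.1. -/
theorem dirac_iso_of_spectrum_covered
    -- the tensor product of `KK^G` is exact in each variable
    [∀ A : C, (tensorLeft A).CommShift ℤ] [∀ A : C, (tensorLeft A).IsTriangulated]
    [∀ A : C, (tensorRight A).CommShift ℤ] [∀ A : C, (tensorRight A).IsTriangulated]
    -- `D h` is the equivariant Kasparov category `KK^H` of the compact subgroup `h ≤ G`
    (H : Type) (D : H → Type u)
    [∀ h, Category.{v} (D h)] [∀ h, Preadditive (D h)] [∀ h, HasZeroObject (D h)]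
    [∀ h, HasShift (D h) ℤ] [∀ h, ∀ n : ℤ, (shiftFunctor (D h) n).Additive]
    [∀ h, Pretriangulated (D h)] [∀ h, MonoidalCategory (D h)]
    [∀ h, HasBinaryBiproducts (D h)]
    -- the restriction functors `Res^H_G : KK^G → KK^H` (tensor triangulated functors)
    (Res : ∀ h, C ⥤ D h)
    [∀ h, (Res h).CommShift ℤ] [∀ h, (Res h).IsTriangulated]
    (hres1 : ∀ h, Nonempty ((Res h).obj (𝟙_ C) ≅ 𝟙_ (D h)))
    (hrest : ∀ (h) (A B : C), Nonempty ((Res h).obj (A ⊗ B) ≅ (Res h).obj A ⊗ (Res h).obj B))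
    -- the induction functors `Ind^G_H : KK^H → KK^G`
    (Ind : ∀ h, D h ⥤ C)
    -- the Meyer–Nest gluing triangle of the unit for `(⟨CI^G⟩_loc, CC^G)`:
    -- `d : P^G(1) → 1` is the Dirac morphism
    (P1 N1 : C) (d : P1 ⟶ 𝟙_ C) (n : 𝟙_ C ⟶ N1) (δ : N1 ⟶ P1⟦(1 : ℤ)⟧)
    (htri : Triangle.mk d n δ ∈ distTriang C)
    -- `P^G(1)` lies in the localizing hull of the compactly induced objects
    (hP1 : P1 ∈ locGen (⋃ h, {A : C | ∃ B : D h, Nonempty ((Ind h).obj B ≅ A)}))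
    -- `N^G(1)` is compactly contractible: it is killed by all restriction functors
    (hN1 : ∀ h, IsZero ((Res h).obj N1))
    -- `N^G(1)` is `⊗`-idempotent
    (hNidem : Nonempty ((N1 ⊗ N1) ≅ N1))
    -- covering hypothesis: `Spc (KK^G) = ⋃_H (Res^H_G)^* (Spc (KK^H))`
    (hcover : ∀ P : Set C, IsPrimeIdeal P →
      ∃ (h : H) (Q : Set (D h)), IsPrimeIdeal Q ∧ P = {A : C | (Res h).obj A ∈ Q}) :
    -- conclusion: the Dirac morphism is an isomorphism, equivalently `N^G(1) ≅ 0`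
    IsIso d ∧ IsZero N1 := by
  -- By the triangle, it suffices to prove that `N1` is a zero object.
  obtain ⟨e⟩ := hNidem
  suffices hz : IsZero N1 by
    exact ⟨(Pretriangulated.Triangle.isZero₃_iff_isIso₁ _ htri).1 hz, hz⟩
  by_contra hz
  -- Zorn: find a thick ⊗-ideal `P` maximal among those not containing `N1`.
  set S : Set (Set C) := {J : Set C | IsThickIdeal J ∧ N1 ∉ J} with hS
  obtain ⟨P, -, hPmax⟩ := zorn_subset_nonempty S
    (fun c hcS hch hcne => ⟨⋃₀ c,
      ⟨isThickIdeal_sUnion_chain hcne hch (fun J hJ => (hcS hJ).1),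
        fun ⟨J, hJ, hNJ⟩ => (hcS hJ).2 hNJ⟩,
      fun s hs => Set.subset_sUnion_of_mem hs⟩)
    {A : C | IsZero A} ⟨isThickIdeal_isZero, hz⟩
  have hPid : IsThickIdeal P := hPmax.prop.1
  have hNP : N1 ∉ P := hPmax.prop.2
  -- `P` is prime.
  have hPprime : IsPrimeIdeal P := by
    refine ⟨hPid, ?_, ?_⟩
    · intro hPu
      exact hNP (hPu ▸ Set.mem_univ N1)
    · intro A B hab
      by_contra hcon
      push_neg at hcon
      obtain ⟨ha, hb⟩ := hcon
      -- by maximality, adjoining any object outside `P` captures `N1`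
      have key : ∀ x, x ∉ P → N1 ∈ thickGen (insert x P) := by
        intro x hx
        by_contra hN
        have hmem : thickGen (insert x P) ∈ S := ⟨isThickIdeal_thickGen _, hN⟩
        have hsub : P ⊆ thickGen (insert x P) :=
          (Set.subset_insert x P).trans (subset_thickGen _)
        exact hx (hPmax.2 hmem hsub (subset_thickGen _ (Set.mem_insert x P)))
      -- Step 1: `N1 ⊗ A ∈ P`.
      have h1 : N1 ⊗ A ∈ P := by
        have hI : IsThickIdeal {y : C | y ⊗ A ∈ P} :=
          isThickIdeal_tensorRight_preimage hPid A
        refine thickGen_subset hI ?_ (key B hb)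
        rintro y (rfl | hy)
        · exact hPid.iso (β_ A y) hab
        · exact hPid.tensor y hy A
      -- Step 2: `N1 ⊗ N1 ∈ P`.
      have h2 : N1 ⊗ N1 ∈ P := by
        have hI : IsThickIdeal {x : C | x ⊗ N1 ∈ P} :=
          isThickIdeal_tensorRight_preimage hPid N1
        refine thickGen_subset hI ?_ (key A ha)
        rintro x (rfl | hx)
        · exact hPid.iso (β_ N1 x) h1
        · exact hPid.tensor x hx N1
      exact hNP (hPid.iso e h2)
  -- By the covering hypothesis, `P` is pulled back from some compact subgroup,
  -- where `N1` restricts to zero; hence `N1 ∈ P`, a contradiction.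
  obtain ⟨h, Q, hQ, rfl⟩ := hcover P hPprime
  exact hNP (hQ.ideal.zero _ (hN1 h))


end Stmt1
end

section
/- Let T be a compactly generated tensor triangulated category and (X,σ) a support on T satisfying axioms (S0) σ(0)=∅, (S2)–(S5) (σ(A⊕B)=σ(A)∪σ(B), σ(TA)=σ(A), σ(B)⊆σ(A)∪σ(C) for triangles, σ(A⊗B)=σ(A)∩σ(B) for A compact) and (S6) σ(∐ᵢAᵢ)=⋃ᵢσ(Aᵢ). For a subset Y ⊆ X set C_Y := {A ∈ T_c : σ(A) ⊆ Y} and T_Y := ⟨C_Y⟩_loc. Then: (a) C_Y is a radical thick ⊗-ideal of T_c, hence C_Y = (T_Y)_c; and (b) every A ∈ T_Y satisfies σ(A) ⊆ Y. -/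
/-!
Each axiom on `σ` says that objects supported in `Y` are closed under the corresponding
operation. Thus (S0), (S3), (S4), (S6) make `{A | σ A ⊆ Y}` localizing, which contains `C_Y` and
hence `T_Y`: this is (b), and (b) gives `(T_Y)_c ⊆ C_Y`. With (S2) and (S5) the compact part
`C_Y` is a thick `⊗`-ideal, and it is radical because (S5) and the symmetry give
`σ(A^{⊗n}) = σ(A) ∩ σ(A^{⊗(n-1)}) = σ(A)` for compact `A` and `n ≥ 1`.
-/

open CategoryTheory Limits Pretriangulated Opposite MonoidalCategory

universe v u

namespace Stmt10

variable {C : Type u} [Category.{v} C] [Preadditive C] [HasZeroObject C]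
  [HasShift C ℤ] [∀ n : ℤ, (shiftFunctor C n).Additive] [Pretriangulated C]
  [MonoidalCategory C] [SymmetricCategory C] [HasCoproducts.{v} C] [HasBinaryBiproducts C]

/-- An object `A` is compact if `Hom(A, -)` preserves small coproducts. -/
def IsCompactObj (A : C) : Prop :=
  ∀ ι : Type v, Nonempty (PreservesColimitsOfShape (Discrete ι)
    (preadditiveCoyoneda.obj (op A)))

/-- The action of the central ring `R_T = End(𝟙)` on morphisms: `r · f := r ⊗ f`
(via the structural unitor identifications). -/
def cmul (r : End (𝟙_ C)) {A B : C} (f : A ⟶ B) : A ⟶ B :=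
  (λ_ A).inv ≫ ((r : 𝟙_ C ⟶ 𝟙_ C) ⊗ₘ f) ≫ (λ_ B).hom

/-- A localizing subcategory, described by its class of objects. -/
structure IsLocalizing (S : Set C) : Prop where
  zero : ∀ A : C, IsZero A → A ∈ S
  iso : ∀ ⦃A B : C⦄, (A ≅ B) → A ∈ S → B ∈ S
  shift : ∀ A ∈ S, A⟦(1 : ℤ)⟧ ∈ S
  unshift : ∀ A ∈ S, A⟦(-1 : ℤ)⟧ ∈ S
  tri : ∀ T ∈ distTriang C, T.obj₁ ∈ S → T.obj₂ ∈ S → T.obj₃ ∈ S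
  coprod : ∀ (ι : Type v) (f : ι → C), (∀ i, f i ∈ S) → (∐ f) ∈ S

/-- The localizing subcategory generated by a class of objects. -/
def locGen (E : Set C) : Set C := ⋂₀ {S : Set C | IsLocalizing S ∧ E ⊆ S}

/-- A thick `⊗`-ideal `J` of a tensor subcategory with class of objects `K`. -/
structure IsThickIdealOn (K J : Set C) : Prop where
  subset : J ⊆ K
  zero : ∀ A : C, IsZero A → A ∈ K → A ∈ J
  iso : ∀ ⦃A B : C⦄, (A ≅ B) → A ∈ J → B ∈ J
  shift : ∀ A ∈ J, A⟦(1 : ℤ)⟧ ∈ J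
  unshift : ∀ A ∈ J, A⟦(-1 : ℤ)⟧ ∈ J
  tri : ∀ T ∈ distTriang C, T.obj₁ ∈ J → T.obj₂ ∈ J → T.obj₃ ∈ K → T.obj₃ ∈ J
  smd : ∀ A B : C, (A ⊞ B) ∈ J → A ∈ K → A ∈ J
  tensor : ∀ A ∈ J, ∀ B ∈ K, (A ⊗ B) ∈ J

/-- The thick `⊗`-ideal of `K` generated by a class of objects. -/
def thickIdealGen (K E : Set C) : Set C := ⋂₀ {J : Set C | IsThickIdealOn K J ∧ E ⊆ J}

/-- The right orthogonal `E^⊥`. -/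
def rightOrth (E : Set C) : Set C := {A : C | ∀ B ∈ E, ∀ f : B ⟶ A, f = 0}

/-- Cones of the morphisms `s : 𝟙 ⟶ 𝟙`, `s ∈ S`. -/
def conesOf (S : Set (End (𝟙_ C))) : Set C :=
  {Z : C | ∃ s ∈ S, ∃ (g : 𝟙_ C ⟶ Z) (h : Z ⟶ (𝟙_ C)⟦(1 : ℤ)⟧),
    Triangle.mk (s : 𝟙_ C ⟶ 𝟙_ C) g h ∈ distTriang C}

/-- Complementary pair of subcategories. -/
structure IsComplementary (L R : Set C) : Prop where
  orth : ∀ A ∈ L, ∀ B ∈ R, ∀ f : A ⟶ B, f = 0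
  glue : ∀ A : C, ∃ (A' A'' : C) (f : A' ⟶ A) (g : A ⟶ A'') (h : A'' ⟶ A'⟦(1 : ℤ)⟧),
    (Triangle.mk f g h ∈ distTriang C) ∧ A' ∈ L ∧ A'' ∈ R

/-- Tensor powers `A^{⊗n}` (with `A^{⊗0} = 𝟙`). -/
def tpow (A : C) : ℕ → C
  | 0 => 𝟙_ C
  | n + 1 => tpow A n ⊗ A

end Stmt10

namespace Stmt10

section

variable {C : Type u} [Category.{v} C] [Preadditive C]

theorem isCompactObj_of_iso {A B : C} (e : A ≅ B) (h : IsCompactObj A) :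
    IsCompactObj B := fun ι =>
  have := (h ι).some
  ⟨preservesColimitsOfShape_of_natIso (preadditiveCoyoneda.mapIso e.symm.op)⟩

section Shift

variable [HasShift C ℤ] [∀ n : ℤ, (shiftFunctor C n).Additive]

noncomputable def shiftCompPreadditiveCoyonedaIso (A : C) (n : ℤ) :
    shiftFunctor C (-n) ⋙ preadditiveCoyoneda.obj (op A) ≅
      preadditiveCoyoneda.obj (op (A⟦n⟧)) :=
  have : (shiftEquiv C n).functor.Additive := inferInstanceAs (shiftFunctor C n).Additive
  NatIso.ofComponents
    (fun B => ((shiftEquiv C n).toAdjunction.homAddEquiv A B).symm.toAddCommGrpIso)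
    (fun f => by
      ext g
      exact Adjunction.homEquiv_naturality_right_symm _ g f)

theorem isCompactObj_shift {A : C} (h : IsCompactObj A) (n : ℤ) :
    IsCompactObj (A⟦n⟧) := fun ι =>
  have := (h ι).some
  ⟨preservesColimitsOfShape_of_natIso (shiftCompPreadditiveCoyonedaIso A n)⟩

variable [HasZeroObject C] [Pretriangulated C] {X : Type*} (σ : C → Set X)

theorem support_obj₃_subset (hS3 : ∀ A : C, σ (A⟦(1 : ℤ)⟧) = σ A)
    (hS4 : ∀ T ∈ distTriang C, σ T.obj₂ ⊆ σ T.obj₁ ∪ σ T.obj₃)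
    {T : Triangle C} (hT : T ∈ distTriang C) : σ T.obj₃ ⊆ σ T.obj₂ ∪ σ T.obj₁ := by
  simpa only [Triangle.rotate_obj₁, Triangle.rotate_obj₂, Triangle.rotate_obj₃, hS3] using
    hS4 T.rotate (rot_of_distTriang T hT)

section Localizing

variable [HasCoproducts.{v} C]

theorem subset_locGen (E : Set C) : E ⊆ locGen E :=
  fun _ hA _ hS => hS.2 hA

theorem locGen_subset {E S : Set C} (hS : IsLocalizing S) (hES : E ⊆ S) : locGen E ⊆ S :=
  fun _ hA => hA S ⟨hS, hES⟩

theorem isLocalizing_setOf_support_subset (hS0 : ∀ A : C, IsZero A → σ A = ∅)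
    (hS3 : ∀ A : C, σ (A⟦(1 : ℤ)⟧) = σ A) (hS3' : ∀ A : C, σ (A⟦(-1 : ℤ)⟧) = σ A)
    (hS4 : ∀ T ∈ distTriang C, σ T.obj₂ ⊆ σ T.obj₁ ∪ σ T.obj₃)
    (hS6 : ∀ (ι : Type v) (f : ι → C), σ (∐ f) = ⋃ i, σ (f i))
    (hiso : ∀ ⦃A B : C⦄, (A ≅ B) → σ A = σ B) (Y : Set X) :
    IsLocalizing {A : C | σ A ⊆ Y} where
  zero A hA := show σ A ⊆ Y by simp only [hS0 A hA, Set.empty_subset]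
  iso _ _ e hA := show σ _ ⊆ Y from hiso e ▸ hA
  shift A hA := show σ _ ⊆ Y from (hS3 A).symm ▸ hA
  unshift A hA := show σ _ ⊆ Y from (hS3' A).symm ▸ hA
  tri T hT h₁ h₂ := (support_obj₃_subset σ hS3 hS4 hT).trans (Set.union_subset h₂ h₁)
  coprod ι f hf := show σ _ ⊆ Y from (hS6 ι f).symm ▸ Set.iUnion_subset hf

end Localizing

theorem isThickIdealOn_compact_support_subset [MonoidalCategory C] [HasBinaryBiproducts C]
    (htc : ∀ A B : C, IsCompactObj A → IsCompactObj B → IsCompactObj (A ⊗ B))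
    (hS0 : ∀ A : C, IsZero A → σ A = ∅) (hS2 : ∀ A B : C, σ (A ⊞ B) = σ A ∪ σ B)
    (hS3 : ∀ A : C, σ (A⟦(1 : ℤ)⟧) = σ A) (hS3' : ∀ A : C, σ (A⟦(-1 : ℤ)⟧) = σ A)
    (hS4 : ∀ T ∈ distTriang C, σ T.obj₂ ⊆ σ T.obj₁ ∪ σ T.obj₃)
    (hS5 : ∀ A B : C, IsCompactObj A → σ (A ⊗ B) = σ A ∩ σ B)
    (hiso : ∀ ⦃A B : C⦄, (A ≅ B) → σ A = σ B) (Y : Set X) :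
    IsThickIdealOn {A : C | IsCompactObj A} {A : C | IsCompactObj A ∧ σ A ⊆ Y} where
  subset _ hA := hA.1
  zero A hA hc := ⟨hc, (hS0 A hA).symm ▸ Set.empty_subset Y⟩
  iso _ _ e hA := ⟨isCompactObj_of_iso e hA.1, hiso e ▸ hA.2⟩
  shift A hA := ⟨isCompactObj_shift hA.1 1, (hS3 A).symm ▸ hA.2⟩
  unshift A hA := ⟨isCompactObj_shift hA.1 (-1), (hS3' A).symm ▸ hA.2⟩
  tri _ hT h₁ h₂ h₃ :=
    ⟨h₃, (support_obj₃_subset σ hS3 hS4 hT).trans (Set.union_subset h₂.2 h₁.2)⟩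
  smd A B hAB hA := ⟨hA, Set.subset_union_left.trans ((hS2 A B).symm ▸ hAB.2)⟩
  tensor A hA B hB := ⟨htc A B hA.1 hB, (hS5 A B hA.1).symm ▸ Set.inter_subset_left.trans hA.2⟩

end Shift

theorem support_tpow_succ [MonoidalCategory C] [BraidedCategory C] {X : Type*} (σ : C → Set X)
    (hS5 : ∀ A B : C, IsCompactObj A → σ (A ⊗ B) = σ A ∩ σ B)
    (hiso : ∀ ⦃A B : C⦄, (A ≅ B) → σ A = σ B) {A : C} (hA : IsCompactObj A) :
    ∀ n : ℕ, σ (tpow A (n + 1)) = σ A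
  | 0 => hiso (λ_ A)
  | n + 1 => calc
      σ (tpow A (n + 1) ⊗ A) = σ (A ⊗ tpow A (n + 1)) := hiso (β_ _ _)
      _ = σ A := by rw [hS5 _ _ hA, support_tpow_succ σ hS5 hiso hA n, Set.inter_self]

end

variable {C : Type u} [Category.{v} C] [Preadditive C] [HasZeroObject C]
  [HasShift C ℤ] [∀ n : ℤ, (shiftFunctor C n).Additive] [Pretriangulated C]
  [MonoidalCategory C] [SymmetricCategory C] [HasCoproducts.{v} C] [HasBinaryBiproducts C]

/-- Lemma 3.4.  Let `(X, σ)` be a support on `T` satisfying axioms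
(S0), (S2)–(S5) and (S6).  For `Y ⊆ X` put `C_Y := {A ∈ T_c : σ(A) ⊆ Y}` and
`T_Y := ⟨C_Y⟩_loc`.  Then (a) `C_Y` is a radical thick `⊗`-ideal of `T_c`, hence
`C_Y = (T_Y)_c`, and (b) every `A ∈ T_Y` satisfies `σ(A) ⊆ Y`. -/
theorem support_CY_TY
    [∀ (A : C) (ι : Type v), PreservesColimitsOfShape (Discrete ι) (tensorLeft A)]
    [∀ (A : C) (ι : Type v), PreservesColimitsOfShape (Discrete ι) (tensorRight A)]
    [∀ A : C, (tensorLeft A).CommShift ℤ] [∀ A : C, (tensorLeft A).IsTriangulated]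
    [∀ A : C, (tensorRight A).CommShift ℤ] [∀ A : C, (tensorRight A).IsTriangulated]
    (hunit : IsCompactObj (𝟙_ C))
    (htc : ∀ A B : C, IsCompactObj A → IsCompactObj B → IsCompactObj (A ⊗ B))
    (dual : C → C)
    (hdualc : ∀ A : C, IsCompactObj A → IsCompactObj (dual A))
    (hdualadj : ∀ A : C, IsCompactObj A → ∀ X Y : C,
      Nonempty ((X ⊗ A ⟶ Y) ≃ (X ⟶ Y ⊗ dual A)))
    (hgen : locGen {A : C | IsCompactObj A} = Set.univ)
    -- a support `(X, σ)` on `T`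
    {X : Type*} (σ : C → Set X)
    -- (S0)
    (hS0 : ∀ A : C, IsZero A → σ A = ∅)
    -- (S2)
    (hS2 : ∀ A B : C, σ (A ⊞ B) = σ A ∪ σ B)
    -- (S3)
    (hS3 : ∀ A : C, σ (A⟦(1 : ℤ)⟧) = σ A)
    (hS3' : ∀ A : C, σ (A⟦(-1 : ℤ)⟧) = σ A)
    -- (S4)
    (hS4 : ∀ T ∈ distTriang C, σ T.obj₂ ⊆ σ T.obj₁ ∪ σ T.obj₃)
    -- (S5), for `A` compact and `B` arbitrary
    (hS5 : ∀ A B : C, IsCompactObj A → σ (A ⊗ B) = σ A ∩ σ B)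
    -- (S6)
    (hS6 : ∀ (ι : Type v) (f : ι → C), σ (∐ f) = ⋃ i, σ (f i))
    -- σ is invariant under isomorphism
    (hiso : ∀ ⦃A B : C⦄, (A ≅ B) → σ A = σ B)
    (Y : Set X) :
    -- (a) `C_Y` is a radical thick `⊗`-ideal of `T_c` …
    IsThickIdealOn {A : C | IsCompactObj A} {A : C | IsCompactObj A ∧ σ A ⊆ Y} ∧
    (∀ A : C, IsCompactObj A → ∀ n : ℕ,
      (IsCompactObj (tpow A n) ∧ σ (tpow A n) ⊆ Y) → 1 ≤ n → (IsCompactObj A ∧ σ A ⊆ Y)) ∧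
    -- … hence `C_Y = (T_Y)_c`
    {A : C | IsCompactObj A ∧ σ A ⊆ Y} =
      locGen {A : C | IsCompactObj A ∧ σ A ⊆ Y} ∩ {A : C | IsCompactObj A} ∧
    -- (b) every `A ∈ T_Y` satisfies `σ(A) ⊆ Y`
    (∀ A ∈ locGen {A : C | IsCompactObj A ∧ σ A ⊆ Y}, σ A ⊆ Y) := by
  have hb : ∀ A ∈ locGen {A : C | IsCompactObj A ∧ σ A ⊆ Y}, σ A ⊆ Y :=
    locGen_subset (isLocalizing_setOf_support_subset σ hS0 hS3 hS3' hS4 hS6 hiso Y)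
      fun _ hA => hA.2
  refine ⟨isThickIdealOn_compact_support_subset σ htc hS0 hS2 hS3 hS3' hS4 hS5 hiso Y,
    ?radical, ?compact, hb⟩
  case radical =>
    rintro A hA n ⟨-, hn⟩ h1
    obtain ⟨m, rfl⟩ := Nat.exists_eq_add_of_le' h1
    exact ⟨hA, support_tpow_succ σ hS5 hiso hA m ▸ hn⟩
  case compact =>
    ext A
    exact ⟨fun hA => ⟨subset_locGen _ hA, hA.1⟩, fun hA => ⟨hA.2, hb A hA.1⟩⟩

end Stmt10
end
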